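/- arXiv:2511.03284 — 3 statements merged into one kernel-verified Lean document; each statement's English description precedes it below -/
import Mathlib

section
/- Let W̄ be a symmetric doubly stochastic matrix with ρ(W̄) = λ₂(W̄), and let v be a unit eigenvector of W̄ for eigenvalue λ₂(W̄). Then for every symmetric doubly stochastic matrix W̄', it holds that ρ(W̄') ≥ ρ(W̄) + Tr(vvᵀ (W̄' - W̄)); that is, G = vvᵀ is a subgradient of ρ at W̄. -/
open Matrix BigOperators

def IsDoublyStochastic {M : ℕ} (A : Matrix (Fin M) (Fin M) ℝ) : Prop :=
  (∀ i j, 0 ≤ A i j) ∧ (∀ i, ∑ j, A i j = 1) ∧ (∀ j, ∑ i, A i j = 1)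

/-- Second largest eigenvalue of a symmetric doubly stochastic matrix
    (variational characterization over unit vectors orthogonal to 𝟙). -/
noncomputable def lambda2 {M : ℕ} (A : Matrix (Fin M) (Fin M) ℝ) : ℝ :=
  sSup {r : ℝ | ∃ u : Fin M → ℝ, u ⬝ᵥ u = 1 ∧ (∑ i, u i) = 0 ∧ r = u ⬝ᵥ A.mulVec u}

/-- Smallest eigenvalue (variational characterization over unit vectors). -/
noncomputable def lambdaMin {M : ℕ} (A : Matrix (Fin M) (Fin M) ℝ) : ℝ :=
  sInf {r : ℝ | ∃ u : Fin M → ℝ, u ⬝ᵥ u = 1 ∧ r = u ⬝ᵥ A.mulVec u}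

noncomputable def rho {M : ℕ} (A : Matrix (Fin M) (Fin M) ℝ) : ℝ :=
  max (lambda2 A) (-(lambdaMin A))

lemma quad_le_one {M : ℕ} (A : Matrix (Fin M) (Fin M) ℝ) (hds : IsDoublyStochastic A)
    (u : Fin M → ℝ) (hu : u ⬝ᵥ u = 1) : u ⬝ᵥ A.mulVec u ≤ 1 := by
  obtain ⟨hpos, hrow, hcol⟩ := hds
  have key : u ⬝ᵥ A.mulVec u ≤ ∑ i, ∑ j, A i j * ((u i)^2 + (u j)^2) / 2 := by
    simp only [dotProduct, mulVec, dotProduct, Finset.mul_sum]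
    apply Finset.sum_le_sum
    intro i _
    apply Finset.sum_le_sum
    intro j _
    have h1 : u i * u j ≤ ((u i)^2 + (u j)^2) / 2 := by nlinarith [sq_nonneg (u i - u j)]
    have := hpos i j
    nlinarith
  have e1 : ∑ i, ∑ j, A i j * ((u i)^2 + (u j)^2) / 2 = 1 := by
    have split : ∀ i j, A i j * ((u i)^2 + (u j)^2) / 2
        = A i j * (u i)^2 / 2 + A i j * (u j)^2 / 2 := by intros; ring
    simp only [split, Finset.sum_add_distrib]
    have hu' : ∑ i, (u i)^2 = 1 := by simpa [dotProduct, sq] using hu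
    have h1 : ∑ i, ∑ j, A i j * (u i)^2 / 2 = 1/2 := by
      have t : ∀ i, ∑ j, A i j * (u i)^2 / 2 = (u i)^2 / 2 := by
        intro i
        rw [← Finset.sum_div, ← Finset.sum_mul, hrow, one_mul]
      simp only [t]
      rw [← Finset.sum_div, hu']
    have h2 : ∑ i, ∑ j, A i j * (u j)^2 / 2 = 1/2 := by
      rw [Finset.sum_comm]
      have t : ∀ j, ∑ i, A i j * (u j)^2 / 2 = (u j)^2 / 2 := by
        intro j
        rw [← Finset.sum_div, ← Finset.sum_mul, hcol, one_mul]
      simp only [t]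
      rw [← Finset.sum_div, hu']
    rw [h1, h2]; norm_num
  linarith [key, e1.le]

/-- If ρ(W̄) = λ₂(W̄) and v is a unit eigenvector of W̄ for λ₂(W̄) (orthogonal to 𝟙),
    then G = vvᵀ is a subgradient of ρ at W̄. -/
theorem stmt5 {M : ℕ} (Wbar : Matrix (Fin M) (Fin M) ℝ)
    (hsym : Wbarᵀ = Wbar) (hds : IsDoublyStochastic Wbar)
    (v : Fin M → ℝ) (hunit : v ⬝ᵥ v = 1) (horth : (∑ i, v i) = 0)
    (heig : Wbar.mulVec v = lambda2 Wbar • v)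
    (hcase : rho Wbar = lambda2 Wbar) :
    ∀ Wbar' : Matrix (Fin M) (Fin M) ℝ, Wbar'ᵀ = Wbar' → IsDoublyStochastic Wbar' →
      rho Wbar' ≥ rho Wbar + Matrix.trace (vecMulVec v v * (Wbar' - Wbar)) := by
  intro W' hsym' hds'
  -- trace computation
  have htr : Matrix.trace (vecMulVec v v * (W' - Wbar))
      = v ⬝ᵥ W'.mulVec v - v ⬝ᵥ Wbar.mulVec v := by
    simp only [Matrix.trace, Matrix.diag, Matrix.mul_apply, vecMulVec_apply,
      dotProduct, mulVec, dotProduct, Matrix.sub_apply]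
    rw [Finset.sum_comm]
    rw [← Finset.sum_sub_distrib]
    apply Finset.sum_congr rfl; intro i _
    rw [Finset.mul_sum, Finset.mul_sum, ← Finset.sum_sub_distrib]
    apply Finset.sum_congr rfl; intro j _
    ring
  have hWv : v ⬝ᵥ Wbar.mulVec v = lambda2 Wbar := by
    rw [heig, dotProduct_smul, smul_eq_mul, hunit, mul_one]
  have hbdd : BddAbove {r : ℝ | ∃ u : Fin M → ℝ, u ⬝ᵥ u = 1 ∧ (∑ i, u i) = 0 ∧ r = u ⬝ᵥ W'.mulVec u} := by
    refine ⟨1, ?_⟩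
    rintro r ⟨u, hu, _, rfl⟩
    exact quad_le_one W' hds' u hu
  have hle : v ⬝ᵥ W'.mulVec v ≤ lambda2 W' :=
    le_csSup hbdd ⟨v, hunit, horth, rfl⟩
  have : lambda2 W' ≤ rho W' := le_max_left _ _
  rw [htr, hWv, hcase]
  linarith
end

section
/- Let w ∈ ℝ^m and l ∈ ℝ. The solution q* of the problem minimize ‖q - w‖² subject to 𝟙ᵀ q ≤ l and q ⪰ 0 is given componentwise by q*_j = max{0, w_j - ν*/2}, where ν* ≥ 0 satisfies either ν* = 0 and Σ_j max{0, w_j} ≤ l, or Σ_j max{0, w_j - ν*/2} = l. -/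
open BigOperators

/-- Projection onto {q : q ⪰ 0, 𝟙ᵀq ≤ l}: with multiplier ν* ≥ 0 satisfying the
    stated condition, q*_j = max{0, w_j - ν*/2} is feasible and minimizes ‖q - w‖²
    over the feasible set. -/
theorem stmt8 {m : ℕ} (w : Fin m → ℝ) (l : ℝ) (ν : ℝ) (hν : 0 ≤ ν)
    (hcase : (ν = 0 ∧ ∑ j, max 0 (w j) ≤ l) ∨
             (∑ j, max 0 (w j - ν / 2) = l))
    (q : Fin m → ℝ) (hq : ∀ j, q j = max 0 (w j - ν / 2)) :
    (∀ j, 0 ≤ q j) ∧ (∑ j, q j ≤ l) ∧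
      ∀ p : Fin m → ℝ, (∀ j, 0 ≤ p j) → (∑ j, p j ≤ l) →
        ∑ j, (q j - w j) ^ 2 ≤ ∑ j, (p j - w j) ^ 2 := by
  have hqsum : ∑ j, q j = ∑ j, max 0 (w j - ν / 2) := by
    exact Finset.sum_congr rfl fun j _ => hq j
  have hql : ∑ j, q j ≤ l := by
    rcases hcase with ⟨h0, hle⟩ | heq
    · rw [hqsum]
      calc ∑ j, max 0 (w j - ν / 2) = ∑ j, max 0 (w j) := by
            apply Finset.sum_congr rfl; intro j _; rw [h0]; norm_num
        _ ≤ l := hle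
    · rw [hqsum, heq]
  refine ⟨fun j => by rw [hq j]; exact le_max_left _ _, hql, ?_⟩
  intro p hp hpl
  have key : ∀ j, (q j - w j) ^ 2 ≤ (p j - w j) ^ 2 + ν * (p j - q j) := by
    intro j
    have hpj := hp j
    rw [hq j]
    rcases le_or_gt (w j - ν / 2) 0 with h | h
    · rw [max_eq_left h]; nlinarith
    · rw [max_eq_right h.le]; nlinarith [sq_nonneg (p j - w j + ν / 2)]
  calc ∑ j, (q j - w j) ^ 2 ≤ ∑ j, ((p j - w j) ^ 2 + ν * (p j - q j)) :=
        Finset.sum_le_sum fun j _ => key j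
    _ = ∑ j, (p j - w j) ^ 2 + ν * (∑ j, p j - ∑ j, q j) := by
        rw [Finset.sum_add_distrib, ← Finset.mul_sum, Finset.sum_sub_distrib]
    _ ≤ ∑ j, (p j - w j) ^ 2 := by
        have : ν * (∑ j, p j - ∑ j, q j) ≤ 0 := by
          rcases hcase with ⟨h0, _⟩ | heq
          · rw [h0]; ring_nf; exact le_refl 0
          · have : ∑ j, q j = l := by rw [hqsum, heq]
            nlinarith [hpl]
        linarith
end

section
/- Suppose the transmissions are independent across links. Then the diagonal entries of W̃ = E[(Ŵ)²] - (E[Ŵ])² satisfy W̃_ii = 2 Σ_{k≠i} w_{ki}² (p_{ki} - p_{ki}²) and the off-diagonal entries satisfy W̃_ij = 2 w_{ij}² (p_{ij}² - p_{ij}) for i ≠ j, where Ŵ = I + W ⊙ S - Diag(W S), S is the symmetric 0-1 transmission matrix with zero diagonal whose entry s_{ij} is Bernoulli(p_{ij}), and for i < j the variables s_{ij} are independent with s_{ij} = s_{ji}. -/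
/-!
Entry `(i, j)` of `E[Ŵ²] - E[Ŵ]²` is `∑ k, cov(Ŵ i k, Ŵ k j)`. Every entry of `Ŵ` is affine in
the link variables (`Ŵ i j = w i j * s i j` off the diagonal, `Ŵ i i = 1 - ∑ l, w i l * s l i`),
and by independence `cov(s a b, s c d)` vanishes unless `{a, b} = {c, d}`, in which case it is the
Bernoulli variance `p a b - p a b ^ 2`. Expanding bilinearly, off the diagonal only the terms
`k = i` and `k = j` survive; on the diagonal, the term `k = i` and the terms `k ≠ i` each
contribute one copy of `∑ k ≠ i, w k i ^ 2 * (p k i - p k i ^ 2)`.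
-/

open Matrix BigOperators MeasureTheory ProbabilityTheory

/-- The random mixing matrix Ŵ = I + W ⊙ S - Diag(W S). -/
noncomputable def mixingMatrix {M : ℕ} (W S : Matrix (Fin M) (Fin M) ℝ) :
    Matrix (Fin M) (Fin M) ℝ :=
  1 + Matrix.hadamard W S - Matrix.diagonal fun i => (W * S) i i

lemma mixingMatrix_apply_of_ne {M : ℕ} (W S : Matrix (Fin M) (Fin M) ℝ) {i j : Fin M}
    (hij : i ≠ j) : mixingMatrix W S i j = W i j * S i j := by
  simp [mixingMatrix, one_apply_ne hij, diagonal_apply_ne _ hij]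

lemma mixingMatrix_apply_self {M : ℕ} (W S : Matrix (Fin M) (Fin M) ℝ) {i : Fin M}
    (hS : S i i = 0) : mixingMatrix W S i i = 1 - ∑ l, W i l * S l i := by
  simp [mixingMatrix, hS, mul_apply]

lemma Matrix.sum_covariance_eq_integral_mul_apply_sub {Ω m n p : Type*} [MeasurableSpace Ω]
    {μ : Measure Ω} [IsProbabilityMeasure μ] [Fintype n] {X : Ω → Matrix m n ℝ}
    {Y : Ω → Matrix n p ℝ} (hX : ∀ i k, MemLp (fun ω => X ω i k) 2 μ)
    (hY : ∀ k j, MemLp (fun ω => Y ω k j) 2 μ) (i : m) (j : p) :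
    ∑ k, cov[fun ω => X ω i k, fun ω => Y ω k j; μ] =
      ∫ ω, (X ω * Y ω) i j ∂μ - ∑ k, (∫ ω, X ω i k ∂μ) * ∫ ω, Y ω k j ∂μ := by
  simp_rw [mul_apply]
  rw [integral_finsetSum (f := fun k ω => X ω i k * Y ω k j) _
    fun k _ => (hX i k).integrable_mul (hY k j), ← Finset.sum_sub_distrib]
  exact Finset.sum_congr rfl fun k _ => covariance_eq_sub (hX i k) (hY k j)

structure IsIndepBernoulliLinks {ι Ω : Type*} [LinearOrder ι] [MeasurableSpace Ω]
    (μ : Measure Ω) (S : Ω → Matrix ι ι ℝ) (P : Matrix ι ι ℝ) : Prop where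
  measurable : ∀ i j, Measurable fun ω => S ω i j
  symm : ∀ ω, (S ω)ᵀ = S ω
  diag : ∀ ω i, S ω i i = 0
  zero_or_one : ∀ ω i j, S ω i j = 0 ∨ S ω i j = 1
  integral_eq : ∀ i j, ∫ ω, S ω i j ∂μ = P i j
  indepFun : ∀ i j k l, i < j → k < l → (i, j) ≠ (k, l) →
    IndepFun (fun ω => S ω i j) (fun ω => S ω k l) μ

namespace IsIndepBernoulliLinks

variable {ι Ω : Type*} [LinearOrder ι] [MeasurableSpace Ω] {μ : Measure Ω}
  {S : Ω → Matrix ι ι ℝ} {P : Matrix ι ι ℝ}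

lemma entry_comm (h : IsIndepBernoulliLinks μ S P) (a b : ι) :
    (fun ω => S ω b a) = fun ω => S ω a b :=
  funext fun ω => congrFun (congrFun (h.symm ω) a) b

lemma apply_comm (h : IsIndepBernoulliLinks μ S P) (a b : ι) : P b a = P a b := by
  rw [← h.integral_eq, ← h.integral_eq, h.entry_comm]

lemma memLp [IsFiniteMeasure μ] (h : IsIndepBernoulliLinks μ S P) (a b : ι) (p : ENNReal) :
    MemLp (fun ω => S ω a b) p μ :=
  MemLp.of_bound (h.measurable a b).aestronglyMeasurable 1 <| .of_forall fun ω => by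
    rcases h.zero_or_one ω a b with h0 | h1 <;> simp [*]

lemma exists_lt_of_ne (h : IsIndepBernoulliLinks μ S P) {a b : ι} (hab : a ≠ b) :
    ∃ a' b', a' < b' ∧ s(a', b') = s(a, b) ∧ (fun ω => S ω a' b') = fun ω => S ω a b := by
  rcases hab.lt_or_gt with hlt | hgt
  · exact ⟨a, b, hlt, rfl, rfl⟩
  · exact ⟨b, a, hgt, Sym2.eq_swap, h.entry_comm a b⟩

lemma covariance_of_ne [IsProbabilityMeasure μ] (h : IsIndepBernoulliLinks μ S P) {a b c d : ι}
    (hne : s(a, b) ≠ s(c, d)) : cov[fun ω => S ω a b, fun ω => S ω c d; μ] = 0 := by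
  rcases eq_or_ne a b with rfl | hab
  · simp [h.diag]
  rcases eq_or_ne c d with rfl | hcd
  · simp [h.diag]
  obtain ⟨a', b', hab', hs, hS⟩ := h.exists_lt_of_ne hab
  obtain ⟨c', d', hcd', ht, hT⟩ := h.exists_lt_of_ne hcd
  rw [← hS, ← hT]
  refine (h.indepFun a' b' c' d' hab' hcd' fun heq => hne ?_).covariance_eq_zero
    (h.memLp a' b' 2) (h.memLp c' d' 2)
  obtain ⟨rfl, rfl⟩ := Prod.mk.inj heq
  exact hs.symm.trans ht

lemma covariance_self [IsProbabilityMeasure μ] (h : IsIndepBernoulliLinks μ S P) (a b : ι) :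
    cov[fun ω => S ω a b, fun ω => S ω a b; μ] = P a b - P a b ^ 2 := by
  have hidem : (fun ω => S ω a b) * (fun ω => S ω a b) = fun ω => S ω a b := funext fun ω => by
    rcases h.zero_or_one ω a b with h0 | h1 <;> simp [*]
  rw [covariance_eq_sub (h.memLp a b 2) (h.memLp a b 2), hidem, h.integral_eq, sq]

lemma covariance_eq [IsProbabilityMeasure μ] (h : IsIndepBernoulliLinks μ S P) (a b c d : ι) :
    cov[fun ω => S ω a b, fun ω => S ω c d; μ] =
      if s(a, b) = s(c, d) then P a b - P a b ^ 2 else 0 := by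
  split_ifs with hs
  · rcases Sym2.eq_iff.mp hs with ⟨rfl, rfl⟩ | ⟨rfl, rfl⟩
    · exact h.covariance_self a b
    · rw [h.entry_comm, h.apply_comm]; exact h.covariance_self _ _
  · exact h.covariance_of_ne hs

section Mixing

variable {M : ℕ} {S : Ω → Matrix (Fin M) (Fin M) ℝ} {P : Matrix (Fin M) (Fin M) ℝ}
  (W : Matrix (Fin M) (Fin M) ℝ)

lemma memLp_mixingMatrix [IsFiniteMeasure μ] (h : IsIndepBernoulliLinks μ S P) (i j : Fin M) :
    MemLp (fun ω => mixingMatrix W (S ω) i j) 2 μ := by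
  rcases eq_or_ne i j with rfl | hij
  · simp_rw [mixingMatrix_apply_self W _ (h.diag _ i)]
    exact (memLp_const 1).sub (memLp_finsetSum _ fun l _ => (h.memLp l i 2).const_mul _)
  · simp_rw [mixingMatrix_apply_of_ne W _ hij]
    exact (h.memLp i j 2).const_mul _

variable [IsProbabilityMeasure μ]

lemma covariance_mixingMatrix_of_ne (h : IsIndepBernoulliLinks μ S P) {i j k : Fin M}
    (hik : i ≠ k) (hkj : k ≠ j) :
    cov[fun ω => mixingMatrix W (S ω) i k, fun ω => mixingMatrix W (S ω) k j; μ] =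
      W i k * W k j * if s(i, k) = s(k, j) then P i k - P i k ^ 2 else 0 := by
  simp_rw [mixingMatrix_apply_of_ne W _ hik, mixingMatrix_apply_of_ne W _ hkj,
    covariance_const_mul_left, covariance_const_mul_right, h.covariance_eq, mul_assoc]

lemma covariance_mixingMatrix_self_left (h : IsIndepBernoulliLinks μ S P) (i : Fin M)
    {Y : Ω → ℝ} (hY : MemLp Y 2 μ) :
    cov[fun ω => mixingMatrix W (S ω) i i, Y; μ] =
      -∑ l, W i l * cov[fun ω => S ω l i, Y; μ] := by
  have hsum : ∀ l, MemLp (fun ω => W i l * S ω l i) 2 μ := fun l => (h.memLp l i 2).const_mul _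
  simp_rw [mixingMatrix_apply_self W _ (h.diag _ i)]
  rw [covariance_const_sub_left ((memLp_finsetSum _ fun l _ => hsum l).integrable one_le_two),
    covariance_fun_sum_left hsum hY]
  simp_rw [covariance_const_mul_left]

lemma covariance_mixingMatrix_self_right (h : IsIndepBernoulliLinks μ S P) (i : Fin M)
    {X : Ω → ℝ} (hX : MemLp X 2 μ) :
    cov[X, fun ω => mixingMatrix W (S ω) i i; μ] =
      -∑ l, W i l * cov[X, fun ω => S ω l i; μ] := by
  simp_rw [covariance_comm X, h.covariance_mixingMatrix_self_left W i hX]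

lemma covariance_mixingMatrix_self_of_ne (h : IsIndepBernoulliLinks μ S P) {i j : Fin M}
    (hij : i ≠ j) :
    cov[fun ω => mixingMatrix W (S ω) i i, fun ω => mixingMatrix W (S ω) i j; μ] =
      -(W i j ^ 2 * (P i j - P i j ^ 2)) := by
  rw [h.covariance_mixingMatrix_self_left W i (h.memLp_mixingMatrix W i j)]
  simp_rw [mixingMatrix_apply_of_ne W _ hij, covariance_const_mul_right, h.covariance_eq,
    Sym2.eq_swap (a := i) (b := j), Sym2.congr_left]
  simp only [mul_ite, mul_zero, Finset.sum_ite_eq', Finset.mem_univ, if_true, h.apply_comm j i]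
  ring

lemma covariance_mixingMatrix_of_ne_self (h : IsIndepBernoulliLinks μ S P) {i j : Fin M}
    (hij : i ≠ j) :
    cov[fun ω => mixingMatrix W (S ω) i j, fun ω => mixingMatrix W (S ω) j j; μ] =
      -(W i j * W j i * (P i j - P i j ^ 2)) := by
  rw [h.covariance_mixingMatrix_self_right W j (h.memLp_mixingMatrix W i j)]
  simp_rw [mixingMatrix_apply_of_ne W _ hij, covariance_const_mul_left, h.covariance_eq,
    Sym2.congr_left]
  simp only [mul_ite, mul_zero, Finset.sum_ite_eq, Finset.mem_univ, if_true]
  ring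

lemma covariance_mixingMatrix_self_self (h : IsIndepBernoulliLinks μ S P) (i : Fin M) :
    cov[fun ω => mixingMatrix W (S ω) i i, fun ω => mixingMatrix W (S ω) i i; μ] =
      ∑ l, W i l ^ 2 * (P l i - P l i ^ 2) := by
  rw [h.covariance_mixingMatrix_self_left W i (h.memLp_mixingMatrix W i i)]
  have hcov : ∀ l, cov[fun ω => S ω l i, fun ω => mixingMatrix W (S ω) i i; μ] =
      -(W i l * (P l i - P l i ^ 2)) := fun l => by
    rw [h.covariance_mixingMatrix_self_right W i (h.memLp l i 2)]
    simp_rw [h.covariance_eq, Sym2.congr_left]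
    simp
  simp [hcov, sq, mul_assoc]

end Mixing

end IsIndepBernoulliLinks

theorem stmt15_general {M : ℕ} {Ω : Type*} [MeasurableSpace Ω] (μ : Measure Ω)
    [IsProbabilityMeasure μ]
    (W P : Matrix (Fin M) (Fin M) ℝ)
    (hWsym : Wᵀ = W) (hPdiag : ∀ i, P i i = 0)
    (S : Ω → Matrix (Fin M) (Fin M) ℝ)
    (hmeas : ∀ i j, Measurable fun ω => S ω i j)
    (hSsym : ∀ ω, (S ω)ᵀ = S ω)
    (hSdiag : ∀ ω i, S ω i i = 0)
    (hS01 : ∀ ω i j, S ω i j = 0 ∨ S ω i j = 1)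
    (hmean : ∀ i j, ∫ ω, S ω i j ∂μ = P i j)
    (hindep : ∀ i j k l : Fin M, i < j → k < l → (i, j) ≠ (k, l) →
      IndepFun (fun ω => S ω i j) (fun ω => S ω k l) μ)
    (Ebar E2 Wt : Matrix (Fin M) (Fin M) ℝ)
    (hEbar : ∀ i j, Ebar i j = ∫ ω, mixingMatrix W (S ω) i j ∂μ)
    (hE2 : ∀ i j, E2 i j = ∫ ω, (mixingMatrix W (S ω) * mixingMatrix W (S ω)) i j ∂μ)
    (hWt : Wt = E2 - Ebar * Ebar) :
    (∀ i, Wt i i = 2 * ∑ k ∈ Finset.univ.erase i, (W k i) ^ 2 * (P k i - (P k i) ^ 2)) ∧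
    (∀ i j, i ≠ j → Wt i j = 2 * (W i j) ^ 2 * ((P i j) ^ 2 - P i j)) := by
  have h : IsIndepBernoulliLinks μ S P := ⟨hmeas, hSsym, hSdiag, hS01, hmean, hindep⟩
  have hW : ∀ i j, W j i = W i j := fun i j => congrFun (congrFun hWsym i) j
  have hWt_cov : ∀ i j, Wt i j =
      ∑ k, cov[fun ω => mixingMatrix W (S ω) i k, fun ω => mixingMatrix W (S ω) k j; μ] := by
    intro i j
    rw [Matrix.sum_covariance_eq_integral_mul_apply_sub (h.memLp_mixingMatrix W)
      (h.memLp_mixingMatrix W), hWt, Matrix.sub_apply, hE2, mul_apply]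
    simp only [hEbar]
  refine ⟨fun i => ?_, fun i j hij => ?_⟩
  · have hoff : ∀ k ∈ Finset.univ.erase i,
        cov[fun ω => mixingMatrix W (S ω) i k, fun ω => mixingMatrix W (S ω) k i; μ] =
          W k i ^ 2 * (P k i - P k i ^ 2) := fun k hk => by
      have hki := Finset.ne_of_mem_erase hk
      rw [h.covariance_mixingMatrix_of_ne W hki.symm hki, if_pos Sym2.eq_swap, hW,
        h.apply_comm]
      ring
    rw [hWt_cov, ← Finset.add_sum_erase _ _ (Finset.mem_univ i), Finset.sum_congr rfl hoff,
      h.covariance_mixingMatrix_self_self, ← Finset.add_sum_erase _ _ (Finset.mem_univ i), hPdiag]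
    simp_rw [hW i]
    ring
  · have hcross : ∀ k, k ≠ i ∧ k ≠ j →
        cov[fun ω => mixingMatrix W (S ω) i k, fun ω => mixingMatrix W (S ω) k j; μ] = 0 :=
      fun k ⟨hki, hkj⟩ => by
        rw [h.covariance_mixingMatrix_of_ne W hki.symm hkj, if_neg (by simp [hij, hki.symm]),
          mul_zero]
    rw [hWt_cov, Fintype.sum_eq_add i j hij hcross, h.covariance_mixingMatrix_self_of_ne W hij,
      h.covariance_mixingMatrix_of_ne_self W hij, hW]
    ring

/-- Entries of the covariance-type matrix W̃ = E[(Ŵ)²] - (E[Ŵ])² under independent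
    Bernoulli link activations. -/
theorem stmt15 {M : ℕ} {Ω : Type*} [MeasurableSpace Ω] (μ : Measure Ω)
    [IsProbabilityMeasure μ]
    (W P : Matrix (Fin M) (Fin M) ℝ)
    (hWsym : Wᵀ = W) (hWds : IsDoublyStochastic W)
    (hP01 : ∀ i j, P i j ∈ Set.Icc (0 : ℝ) 1) (hPdiag : ∀ i, P i i = 0)
    (S : Ω → Matrix (Fin M) (Fin M) ℝ)
    (hmeas : ∀ i j, Measurable fun ω => S ω i j)
    (hSsym : ∀ ω, (S ω)ᵀ = S ω)
    (hSdiag : ∀ ω i, S ω i i = 0)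
    (hS01 : ∀ ω i j, S ω i j = 0 ∨ S ω i j = 1)
    (hmean : ∀ i j, ∫ ω, S ω i j ∂μ = P i j)
    (hindep : ∀ i j k l : Fin M, i < j → k < l → (i, j) ≠ (k, l) →
      IndepFun (fun ω => S ω i j) (fun ω => S ω k l) μ)
    (Ebar E2 Wt : Matrix (Fin M) (Fin M) ℝ)
    (hEbar : ∀ i j, Ebar i j = ∫ ω, mixingMatrix W (S ω) i j ∂μ)
    (hE2 : ∀ i j, E2 i j = ∫ ω, (mixingMatrix W (S ω) * mixingMatrix W (S ω)) i j ∂μ)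
    (hWt : Wt = E2 - Ebar * Ebar) :
    (∀ i, Wt i i = 2 * ∑ k ∈ Finset.univ.erase i, (W k i) ^ 2 * (P k i - (P k i) ^ 2)) ∧
    (∀ i j, i ≠ j → Wt i j = 2 * (W i j) ^ 2 * ((P i j) ^ 2 - P i j)) :=
  stmt15_general μ W P hWsym hPdiag S hmeas hSsym hSdiag hS01 hmean hindep Ebar E2 Wt hEbar hE2 hWt
end
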